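/- arXiv:1211.7135 — 8 statements merged into one kernel-verified Lean document; each statement's English description precedes it below -/
import Mathlib

section
/- Let L be a Lie ring in which 2x = 0 implies x = 0 (characteristic not 2). If ⁅⁅x,y⁆,⁅x,z⁆⁆ = 0 for all x, y, z ∈ L, then L is metabelian, i.e., ⁅⁅a,b⁆,⁅c,d⁆⁆ = 0 for all a, b, c, d ∈ L. -/
/-!
Polarising the identity `⁅⁅x, y⁆, ⁅x, z⁆⁆ = 0` in `x` shows that `⁅⁅a, b⁆, ⁅c, d⁆⁆` changes sign
when `a` and `c` are exchanged. Combined with antisymmetry of the brackets, this exchange yields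
both `⁅⁅a, b⁆, ⁅c, d⁆⁆ = ⁅⁅a, d⁆, ⁅c, b⁆⁆` and `⁅⁅a, b⁆, ⁅c, d⁆⁆ = -⁅⁅a, d⁆, ⁅c, b⁆⁆`, so twice every
such bracket vanishes.
-/

section

variable {L : Type*} [LieRing L]

theorem lie_lie_swap_swap (x y w z : L) : ⁅⁅y, x⁆, ⁅z, w⁆⁆ = ⁅⁅x, y⁆, ⁅w, z⁆⁆ := by
  rw [← lie_skew x y, ← lie_skew w z, neg_lie, lie_neg, neg_neg]

theorem lie_lie_eq_neg_of_lie_lie_self_eq_zero (h : ∀ x y z : L, ⁅⁅x, y⁆, ⁅x, z⁆⁆ = 0)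
    (x y w z : L) : ⁅⁅x, y⁆, ⁅w, z⁆⁆ = -⁅⁅w, y⁆, ⁅x, z⁆⁆ := by
  have H := h (x + w) y z
  simp only [add_lie, lie_add, h x y z, h w y z, add_zero, zero_add] at H
  exact eq_neg_of_add_eq_zero_right H

theorem two_smul_lie_lie_eq_zero_of_lie_lie_self_eq_zero
    (h : ∀ x y z : L, ⁅⁅x, y⁆, ⁅x, z⁆⁆ = 0) (a b c d : L) : 2 • ⁅⁅a, b⁆, ⁅c, d⁆⁆ = 0 := by
  have swap := lie_lie_eq_neg_of_lie_lie_self_eq_zero h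
  have h₁ : ⁅⁅a, b⁆, ⁅c, d⁆⁆ = ⁅⁅a, d⁆, ⁅c, b⁆⁆ := by
    rw [← lie_skew ⁅a, b⁆ ⁅c, d⁆, swap c d a b, neg_neg]
  have h₂ : ⁅⁅a, b⁆, ⁅c, d⁆⁆ = -⁅⁅a, d⁆, ⁅c, b⁆⁆ := by
    rw [← lie_lie_swap_swap, swap b a d c, lie_lie_swap_swap]
  rw [two_smul]
  nth_rw 1 [h₁]
  rw [h₂, add_neg_cancel]

end

theorem stmt_1 (L : Type*) [LieRing L]
    (hchar : ∀ x : L, 2 • x = 0 → x = 0)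
    (h : ∀ x y z : L, ⁅⁅x, y⁆, ⁅x, z⁆⁆ = 0) :
    ∀ a b c d : L, ⁅⁅a, b⁆, ⁅c, d⁆⁆ = 0 :=
  fun a b c d => hchar _ (two_smul_lie_lie_eq_zero_of_lie_lie_self_eq_zero h a b c d)
end

section
/- Let L be a Lie ring satisfying ⁅⁅x,y⁆,x⁆ = 0 for all x, y ∈ L, and suppose 3x = 0 implies x = 0 for all x ∈ L. Then ⁅⁅x,y⁆,z⁆ = 0 for all x, y, z ∈ L (i.e., L is nilpotent of class at most 2). -/
/-!
Linearizing `⁅⁅x, y⁆, x⁆ = 0` makes the triple bracket `⁅⁅x, y⁆, z⁆` alternating in `x` and `z`;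
together with skew-symmetry in `x` and `y` this makes it invariant under cyclic permutations.
The three terms of the Jacobi identity are then equal, so `3 • ⁅⁅x, y⁆, z⁆ = 0`.
-/

section LieRing

variable {L : Type*} [LieRing L]

theorem lie_lie_add_lie_lie_add_lie_lie (x y z : L) :
    ⁅⁅x, y⁆, z⁆ + ⁅⁅y, z⁆, x⁆ + ⁅⁅z, x⁆, y⁆ = 0 := by
  rw [← lie_skew ⁅x, y⁆, ← lie_skew ⁅y, z⁆, ← lie_skew ⁅z, x⁆, ← neg_add, ← neg_add,
    add_comm, ← add_assoc, lie_jacobi, neg_zero]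

theorem lie_lie_eq_neg_lie_lie_swap_of_engel (h : ∀ x y : L, ⁅⁅x, y⁆, x⁆ = 0)
    (x y z : L) : ⁅⁅x, y⁆, z⁆ = -⁅⁅z, y⁆, x⁆ := by
  have hxz := h (x + z) y
  simp only [add_lie, lie_add, h x y, h z y, zero_add, add_zero] at hxz
  exact eq_neg_of_add_eq_zero_right hxz

theorem lie_lie_cycle_of_engel (h : ∀ x y : L, ⁅⁅x, y⁆, x⁆ = 0)
    (x y z : L) : ⁅⁅x, y⁆, z⁆ = ⁅⁅y, z⁆, x⁆ := by
  rw [lie_lie_eq_neg_lie_lie_swap_of_engel h, ← neg_lie, lie_skew]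

theorem three_nsmul_lie_lie_eq_zero_of_engel (h : ∀ x y : L, ⁅⁅x, y⁆, x⁆ = 0)
    (x y z : L) : 3 • ⁅⁅x, y⁆, z⁆ = 0 := by
  have hcyc := lie_lie_add_lie_lie_add_lie_lie x y z
  rwa [← lie_lie_cycle_of_engel h x y z, lie_lie_cycle_of_engel h z x y, ← two_nsmul,
    ← succ_nsmul] at hcyc

end LieRing

theorem stmt_2 (L : Type*) [LieRing L]
    (h : ∀ x y : L, ⁅⁅x, y⁆, x⁆ = 0)
    (hchar : ∀ x : L, 3 • x = 0 → x = 0) :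
    ∀ x y z : L, ⁅⁅x, y⁆, z⁆ = 0 :=
  fun x y z => hchar _ (three_nsmul_lie_lie_eq_zero_of_engel h x y z)
end

section
/- Let L be a Lie ring satisfying ⁅⁅x,y⁆,x⁆ = 0 for all x, y ∈ L. If 3x = 0 for all x ∈ L (characteristic 3), then L is metabelian, i.e., ⁅⁅a,b⁆,⁅c,d⁆⁆ = 0 for all a, b, c, d ∈ L. -/
/-!
Linearizing `⁅⁅x, y⁆, x⁆ = 0` shows that `⁅⁅x, y⁆, z⁆` is alternating in `x, y, z`. Then the
Leibniz rule gives `3 ⁅⁅x, y⁆, z⁆ = 0`, while `⁅⁅⁅a, b⁆, c⁆, d⁆` becomes alternating in all four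
variables, so comparing `⁅⁅a, b⁆, ⁅c, d⁆⁆` with `-⁅⁅c, d⁆, ⁅a, b⁆⁆` (an even permutation) gives
`2 ⁅⁅a, b⁆, ⁅c, d⁆⁆ = 0`; the two torsion relations together kill it.
-/

def IsTwoEngel (L : Type*) [LieRing L] : Prop :=
  ∀ x y : L, ⁅⁅x, y⁆, x⁆ = 0

namespace IsTwoEngel

variable {L : Type*} [LieRing L]

theorem lie_lie_eq_neg_lie_lie_rev (h : IsTwoEngel L) (x y z : L) :
    ⁅⁅x, y⁆, z⁆ = -⁅⁅z, y⁆, x⁆ := by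
  have e := h (x + z) y
  simp only [add_lie, lie_add, h x y, h z y, zero_add, add_zero] at e
  exact eq_neg_of_add_eq_zero_right e

theorem lie_lie_eq_neg_lie_lie_swap (h : IsTwoEngel L) (x y z : L) :
    ⁅⁅x, y⁆, z⁆ = -⁅⁅x, z⁆, y⁆ := by
  rw [h.lie_lie_eq_neg_lie_lie_rev x y z, ← lie_skew z y, neg_lie, neg_neg,
    h.lie_lie_eq_neg_lie_lie_rev y z x]

theorem lie_lie_right (h : IsTwoEngel L) (x y z : L) :
    ⁅x, ⁅y, z⁆⁆ = -⁅⁅x, y⁆, z⁆ := by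
  rw [← lie_skew, h.lie_lie_eq_neg_lie_lie_rev y z x, neg_neg,
    h.lie_lie_eq_neg_lie_lie_swap x z y]

theorem three_nsmul_lie_lie (h : IsTwoEngel L) (x y z : L) :
    3 • ⁅⁅x, y⁆, z⁆ = 0 := by
  have e := leibniz_lie x y z
  rw [h.lie_lie_right x y z, h.lie_lie_right y x z, ← lie_skew y x, neg_lie, neg_neg] at e
  rw [succ_nsmul, two_nsmul, ← e, neg_add_cancel]

theorem two_nsmul_lie_lie_lie_lie (h : IsTwoEngel L) (a b c d : L) :
    2 • ⁅⁅a, b⁆, ⁅c, d⁆⁆ = 0 := by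
  have even_perm : ⁅⁅⁅c, d⁆, a⁆, b⁆ = ⁅⁅⁅a, b⁆, c⁆, d⁆ := by
    rw [h.lie_lie_eq_neg_lie_lie_swap c d a, neg_lie, h.lie_lie_eq_neg_lie_lie_swap _ d b,
      neg_neg, ← lie_skew c a, neg_lie, neg_lie, h.lie_lie_eq_neg_lie_lie_swap a c b, neg_lie,
      neg_neg]
  have e : ⁅⁅a, b⁆, ⁅c, d⁆⁆ = -⁅⁅a, b⁆, ⁅c, d⁆⁆ := by
    conv_lhs => rw [← lie_skew, h.lie_lie_right, neg_neg, even_perm]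
    rw [h.lie_lie_right, neg_neg]
  rw [two_nsmul]
  nth_rw 2 [e]
  exact add_neg_cancel _

theorem lie_lie_lie_lie_eq_zero (h : IsTwoEngel L) (a b c d : L) :
    ⁅⁅a, b⁆, ⁅c, d⁆⁆ = 0 := by
  have h3 := h.three_nsmul_lie_lie a b ⁅c, d⁆
  rwa [succ_nsmul, h.two_nsmul_lie_lie_lie_lie, zero_add] at h3

end IsTwoEngel

theorem stmt_3_general (L : Type*) [LieRing L]
    (h : ∀ x y : L, ⁅⁅x, y⁆, x⁆ = 0) :
    ∀ a b c d : L, ⁅⁅a, b⁆, ⁅c, d⁆⁆ = 0 :=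
  IsTwoEngel.lie_lie_lie_lie_eq_zero h

theorem stmt_3 (L : Type*) [LieRing L]
    (h : ∀ x y : L, ⁅⁅x, y⁆, x⁆ = 0)
    (hchar : ∀ x : L, 3 • x = 0) :
    ∀ a b c d : L, ⁅⁅a, b⁆, ⁅c, d⁆⁆ = 0 :=
  stmt_3_general L h
end

section
/- Let L be a Lie ring satisfying ⁅⁅⁅x,y₁⁆,y₂⁆,x⁆ = 0 for all x, y₁, y₂ ∈ L, and suppose 3z = 0 implies z = 0 for all z ∈ L. Then L is nilpotent of class at most 3; that is, every bracket of length 4, ⁅⁅⁅⁅x₁,x₂⁆,x₃⁆,x₄⁆, vanishes. -/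
/-!
Write `g a b c d = ⁅⁅⁅a, b⁆, c⁆, d⁆`. Skew-symmetry makes `g` alternating in `a, b`, and
linearizing `⁅⁅⁅x, y₁⁆, y₂⁆, x⁆ = 0` makes it alternating in `a, d`; hence `g` is alternating
in its first, second and fourth arguments. Up to sign, its values on the permutations of
`a, b, c, d` are then four elements `α, β, γ, δ`, one for each choice of the third argument.
The Jacobi identity in the first three arguments, with each of `a, b, c, d` in turn in the
fourth, gives four linear relations among them, and these force `3 • g a b c d = 0`.
-/

section

variable {L : Type*} [LieRing L]

theorem lie_lie_add_lie_lie_add_lie_lie_s8 (a b c : L) :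
    ⁅⁅a, b⁆, c⁆ + ⁅⁅b, c⁆, a⁆ + ⁅⁅c, a⁆, b⁆ = 0 := by
  rw [← lie_skew ⁅a, b⁆ c, ← lie_skew ⁅b, c⁆ a, ← lie_skew ⁅c, a⁆ b, ← neg_add, ← neg_add,
    lie_jacobi c a b, neg_zero]

theorem lie_lie_lie_jacobi (a b c d : L) :
    ⁅⁅⁅a, b⁆, c⁆, d⁆ + ⁅⁅⁅b, c⁆, a⁆, d⁆ + ⁅⁅⁅c, a⁆, b⁆, d⁆ = 0 := by
  rw [← add_lie, ← add_lie, lie_lie_add_lie_lie_add_lie_lie_s8, zero_lie]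

theorem lie_lie_lie_swap_one_two (a b c d : L) : ⁅⁅⁅b, a⁆, c⁆, d⁆ = -⁅⁅⁅a, b⁆, c⁆, d⁆ := by
  rw [← lie_skew a b, neg_lie, neg_lie, neg_neg]

theorem lie_lie_lie_swap_one_four (h : ∀ x y₁ y₂ : L, ⁅⁅⁅x, y₁⁆, y₂⁆, x⁆ = 0) (a b c d : L) :
    ⁅⁅⁅d, b⁆, c⁆, a⁆ = -⁅⁅⁅a, b⁆, c⁆, d⁆ := by
  have hlin := h (a + d) b c
  simp only [add_lie, lie_add, h a b c, h d b c, zero_add, add_zero] at hlin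
  exact eq_neg_of_add_eq_zero_left hlin

theorem lie_lie_lie_swap_two_four (h : ∀ x y₁ y₂ : L, ⁅⁅⁅x, y₁⁆, y₂⁆, x⁆ = 0) (a b c d : L) :
    ⁅⁅⁅a, d⁆, c⁆, b⁆ = -⁅⁅⁅a, b⁆, c⁆, d⁆ := by
  calc ⁅⁅⁅a, d⁆, c⁆, b⁆ = -⁅⁅⁅d, a⁆, c⁆, b⁆ := by rw [lie_lie_lie_swap_one_two d a]
    _ = ⁅⁅⁅b, a⁆, c⁆, d⁆ := by rw [lie_lie_lie_swap_one_four h b, neg_neg]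
    _ = -⁅⁅⁅a, b⁆, c⁆, d⁆ := lie_lie_lie_swap_one_two a b c d

theorem three_smul_lie_lie_lie_eq_zero (h : ∀ x y₁ y₂ : L, ⁅⁅⁅x, y₁⁆, y₂⁆, x⁆ = 0)
    (a b c d : L) : 3 • ⁅⁅⁅a, b⁆, c⁆, d⁆ = 0 := by
  set α := ⁅⁅⁅b, c⁆, a⁆, d⁆
  set β := ⁅⁅⁅a, c⁆, b⁆, d⁆
  set γ := ⁅⁅⁅a, b⁆, c⁆, d⁆
  set δ := ⁅⁅⁅a, b⁆, d⁆, c⁆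
  have jac_d : γ + α - β = 0 := by
    have := lie_lie_lie_jacobi a b c d
    rwa [lie_lie_lie_swap_one_two a c, ← sub_eq_add_neg] at this
  have jac_c : δ - α + β = 0 := by
    have := lie_lie_lie_jacobi a b d c
    rwa [lie_lie_lie_swap_two_four h b c a d, lie_lie_lie_swap_one_four h c a b d,
      lie_lie_lie_swap_one_two a c, neg_neg, ← sub_eq_add_neg] at this
  have jac_b : -δ + α + γ = 0 := by
    have := lie_lie_lie_jacobi a c d b
    rwa [lie_lie_lie_swap_two_four h a b d c, lie_lie_lie_swap_one_four h b d a c,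
      lie_lie_lie_swap_two_four h b c a d, lie_lie_lie_swap_one_four h b a c d,
      lie_lie_lie_swap_one_two a b, neg_neg, neg_neg] at this
  have jac_a : δ + β - γ = 0 := by
    have := lie_lie_lie_jacobi b c d a
    rwa [lie_lie_lie_swap_one_four h a c d b, lie_lie_lie_swap_two_four h a b d c,
      lie_lie_lie_swap_one_four h a d b c, lie_lie_lie_swap_two_four h a c b d,
      lie_lie_lie_swap_one_four h a b c d, neg_neg, neg_neg, ← sub_eq_add_neg] at this
  calc 3 • γ = (γ + α - β) + 2 • (δ - α + β) + (-δ + α + γ) - (δ + β - γ) := by abel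
    _ = 0 := by rw [jac_d, jac_c, jac_b, jac_a]; simp

end

theorem stmt_8 (L : Type*) [LieRing L]
    (h : ∀ x y₁ y₂ : L, ⁅⁅⁅x, y₁⁆, y₂⁆, x⁆ = 0)
    (hchar : ∀ z : L, 3 • z = 0 → z = 0) :
    ∀ x₁ x₂ x₃ x₄ : L, ⁅⁅⁅x₁, x₂⁆, x₃⁆, x₄⁆ = 0 :=
  fun a b c d ↦ hchar _ (three_smul_lie_lie_lie_eq_zero h a b c d)
end

section
/- Let L be a Lie ring in which 3z = 0 for all z (characteristic 3), satisfying ⁅⁅⁅x,y₁⁆,y₂⁆,x⁆ = 0 for all x, y₁, y₂ ∈ L. Then L is nilpotent of class at most 4: every left-normed bracket of length 5 vanishes. -/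
/-!
Linearizing `⁅⁅⁅x, y₁⁆, y₂⁆, x⁆ = 0` in `x` shows that `⁅⁅⁅a, y⁆, z⁆, b⁆` is antisymmetric in
its outer entries `a, b`, while the Jacobi identity expresses `⁅⁅⁅p, q⁆, r⁆, u⁆` through
left-normed brackets starting with `u`. Together these give linear relations among the six
brackets `⁅⁅⁅u, c⁆, d⁆, e⁆` with `c, d, e` permuted, and a suitable combination of them shows
that each such bracket lies in `3 • L`. In characteristic 3 every left-normed bracket of
length 4 therefore already vanishes.
-/

namespace LieRing

variable {L : Type*} [LieRing L]

theorem lie_lie_lie_expand_last (u p q r : L) :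
    ⁅⁅⁅p, q⁆, r⁆, u⁆ =
      -⁅⁅⁅u, p⁆, q⁆, r⁆ + ⁅⁅⁅u, q⁆, p⁆, r⁆ + ⁅⁅⁅u, r⁆, p⁆, q⁆ - ⁅⁅⁅u, r⁆, q⁆, p⁆ := by
  have hpq : ⁅u, ⁅p, q⁆⁆ = ⁅⁅u, p⁆, q⁆ - ⁅⁅u, q⁆, p⁆ := by
    rw [leibniz_lie, ← lie_skew p ⁅u, q⁆]
    abel
  have hpqr : ⁅⁅p, q⁆, ⁅u, r⁆⁆ = ⁅⁅⁅u, r⁆, q⁆, p⁆ - ⁅⁅⁅u, r⁆, p⁆, q⁆ := by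
    rw [← lie_skew ⁅p, q⁆, leibniz_lie, ← lie_skew p ⁅⁅u, r⁆, q⁆]
    abel
  rw [← lie_skew ⁅⁅p, q⁆, r⁆ u, leibniz_lie, hpq, hpqr, sub_lie]
  abel

theorem lie_lie_lie_swap_ends (hengel : ∀ x y₁ y₂ : L, ⁅⁅⁅x, y₁⁆, y₂⁆, x⁆ = 0) (a y z b : L) :
    ⁅⁅⁅a, y⁆, z⁆, b⁆ = -⁅⁅⁅b, y⁆, z⁆, a⁆ := by
  have hab := hengel (a + b) y z
  simp only [add_lie, lie_add, hengel, zero_add, add_zero] at hab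
  exact eq_neg_of_add_eq_zero_right hab

theorem lie_lie_lie_permutation_relation (hengel : ∀ x y₁ y₂ : L, ⁅⁅⁅x, y₁⁆, y₂⁆, x⁆ = 0)
    (u c d e : L) :
    ⁅⁅⁅u, c⁆, d⁆, e⁆ - ⁅⁅⁅u, e⁆, c⁆, d⁆ + ⁅⁅⁅u, c⁆, e⁆, d⁆ + ⁅⁅⁅u, d⁆, e⁆, c⁆
      - ⁅⁅⁅u, d⁆, c⁆, e⁆ = 0 := by
  rw [lie_lie_lie_swap_ends hengel, lie_lie_lie_expand_last]
  abel

theorem lie_lie_lie_add_three_smul_eq_zero (hengel : ∀ x y₁ y₂ : L, ⁅⁅⁅x, y₁⁆, y₂⁆, x⁆ = 0)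
    (u c d e : L) :
    ⁅⁅⁅u, c⁆, d⁆, e⁆ + 3 • (⁅⁅⁅u, c⁆, e⁆, d⁆ + ⁅⁅⁅u, d⁆, e⁆, c⁆) = 0 := by
  have rel := lie_lie_lie_permutation_relation hengel
  linear_combination (norm := abel) rel u c d e + 2 • rel u c e d + rel u d c e
    + 2 • rel u d e c + rel u e c d

end LieRing

theorem stmt_9 (L : Type*) [LieRing L]
    (hchar : ∀ z : L, 3 • z = 0)
    (h : ∀ x y₁ y₂ : L, ⁅⁅⁅x, y₁⁆, y₂⁆, x⁆ = 0) :
    ∀ x₁ x₂ x₃ x₄ x₅ : L, ⁅⁅⁅⁅x₁, x₂⁆, x₃⁆, x₄⁆, x₅⁆ = 0 := by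
  intro x₁ x₂ x₃ x₄ x₅
  have hclass3 : ⁅⁅⁅x₁, x₂⁆, x₃⁆, x₄⁆ = 0 := by
    simpa [hchar] using LieRing.lie_lie_lie_add_three_smul_eq_zero h x₁ x₂ x₃ x₄
  rw [hclass3, zero_lie]
end

section
/- Let L be a Lie ring satisfying ⁅⁅⁅x₁,x₂⁆,x₃⁆,x₄⁆ = ⁅⁅⁅x₁,x₂⁆,x₄⁆,x₃⁆ for all x₁, x₂, x₃, x₄ ∈ L together with the polarized alternating identity ⁅⁅x,y⁆,z⁆ = -⁅⁅z,y⁆,x⁆ for all x, y, z. Then ⁅⁅⁅u,v⁆,x⁆,y⁆ = 0 for all u, v, x, y ∈ L, provided 2w = 0 implies w = 0 in L. -/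
/-!
Fix `v`. The map `(u, x, y) ↦ ⁅⁅⁅u, v⁆, x⁆, y⁆` changes sign when `u` and `x` are swapped (by the
polarized alternating identity) and is invariant when `x` and `y` are swapped. Since
`((1 2) (2 3))³ = 1`, going around this cycle of six swaps returns to the start with sign `(-1)³`,
so twice every such bracket vanishes.
-/

theorem two_nsmul_eq_zero_of_antisymm_of_symm {A M : Type*} [AddCommGroup M]
    (f : A → A → A → M) (hanti : ∀ a b c, f a b c = -f b a c)
    (hsymm : ∀ a b c, f a b c = f a c b) (a b c : A) : 2 • f a b c = 0 := by
  have hneg : f a b c = -f a b c :=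
    calc f a b c = -f b a c := hanti a b c
      _ = -f b c a := by rw [hsymm]
      _ = f c b a := by rw [hanti b c a, neg_neg]
      _ = f c a b := hsymm c b a
      _ = -f a c b := hanti c a b
      _ = -f a b c := by rw [hsymm]
  rw [two_nsmul]
  nth_rewrite 1 [hneg]
  exact neg_add_cancel _

theorem stmt_11 (L : Type*) [LieRing L]
    (h1 : ∀ x₁ x₂ x₃ x₄ : L, ⁅⁅⁅x₁, x₂⁆, x₃⁆, x₄⁆ = ⁅⁅⁅x₁, x₂⁆, x₄⁆, x₃⁆)
    (h2 : ∀ x y z : L, ⁅⁅x, y⁆, z⁆ = -⁅⁅z, y⁆, x⁆)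
    (hchar : ∀ w : L, 2 • w = 0 → w = 0) :
    ∀ u v x y : L, ⁅⁅⁅u, v⁆, x⁆, y⁆ = 0 := by
  intro u v x y
  apply hchar
  refine two_nsmul_eq_zero_of_antisymm_of_symm (fun a b c => ⁅⁅⁅a, v⁆, b⁆, c⁆) ?_ ?_ u x y
  · intro a b c
    rw [h2 a v b, neg_lie]
  · intro a b c
    exact h1 a v b c
end

section
/- Let L be a Lie ring satisfying ⁅⁅⁅x,y⁆,⁅x₁,x₂⁆⁆,⁅x,z⁆⁆ = 0 for all x, y, z, x₁, x₂ ∈ L. Then the derived subring L² = [L,L] is nilpotent of class at most 2, i.e. for all a, b, c, d, e, f ∈ L, ⁅⁅⁅a,b⁆,⁅c,d⁆⁆,⁅e,f⁆⁆ = 0. -/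
theorem stmt_12 (L : Type*) [LieRing L]
    (h : ∀ x y z x₁ x₂ : L, ⁅⁅⁅x, y⁆, ⁅x₁, x₂⁆⁆, ⁅x, z⁆⁆ = 0) :
    ∀ a b c d e f : L, ⁅⁅⁅a, b⁆, ⁅c, d⁆⁆, ⁅e, f⁆⁆ = 0 := by
  -- Linearization of h in x : swapping the 1st and 3rd slots flips the sign.
  have L1 : ∀ x y z e u v : L,
      ⁅⁅⁅x, y⁆, ⁅u, v⁆⁆, ⁅e, z⁆⁆ = -⁅⁅⁅e, y⁆, ⁅u, v⁆⁆, ⁅x, z⁆⁆ := by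
    intro x y z e u v
    have key := h (x + e) y z u v
    simp only [add_lie, lie_add] at key
    rw [h x y z u v, h e y z u v] at key
    simp only [zero_add, add_zero] at key
    rw [eq_neg_iff_add_eq_zero, add_comm]
    exact key
  -- Skew-symmetry in the first pair
  have S1 : ∀ x y e z u v : L,
      ⁅⁅⁅x, y⁆, ⁅u, v⁆⁆, ⁅e, z⁆⁆ = -⁅⁅⁅y, x⁆, ⁅u, v⁆⁆, ⁅e, z⁆⁆ := by
    intro x y e z u v
    rw [← lie_skew x y, neg_lie, neg_lie]
  -- Skew-symmetry in the second pair
  have S2 : ∀ x y e z u v : L,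
      ⁅⁅⁅x, y⁆, ⁅u, v⁆⁆, ⁅e, z⁆⁆ = -⁅⁅⁅x, y⁆, ⁅u, v⁆⁆, ⁅z, e⁆⁆ := by
    intro x y e z u v
    rw [← lie_skew e z, lie_neg]
  -- Full symmetry under the double swap (x,y) ↔ (e,z)
  have SYM : ∀ x y e z u v : L,
      ⁅⁅⁅e, z⁆, ⁅u, v⁆⁆, ⁅x, y⁆⁆ = ⁅⁅⁅x, y⁆, ⁅u, v⁆⁆, ⁅e, z⁆⁆ := by
    intro x y e z u v
    calc ⁅⁅⁅e, z⁆, ⁅u, v⁆⁆, ⁅x, y⁆⁆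
        = -⁅⁅⁅x, z⁆, ⁅u, v⁆⁆, ⁅e, y⁆⁆ := L1 e z y x u v
      _ = -(-⁅⁅⁅z, x⁆, ⁅u, v⁆⁆, ⁅e, y⁆⁆) := by rw [← S1 x z e y u v]
      _ = ⁅⁅⁅z, x⁆, ⁅u, v⁆⁆, ⁅e, y⁆⁆ := neg_neg _
      _ = -⁅⁅⁅e, x⁆, ⁅u, v⁆⁆, ⁅z, y⁆⁆ := L1 z x y e u v
      _ = -(-⁅⁅⁅e, x⁆, ⁅u, v⁆⁆, ⁅y, z⁆⁆) := by rw [← S2 e x z y u v]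
      _ = ⁅⁅⁅e, x⁆, ⁅u, v⁆⁆, ⁅y, z⁆⁆ := neg_neg _
      _ = -⁅⁅⁅y, x⁆, ⁅u, v⁆⁆, ⁅e, z⁆⁆ := L1 e x z y u v
      _ = -(-⁅⁅⁅x, y⁆, ⁅u, v⁆⁆, ⁅e, z⁆⁆) := by rw [← S1 y x e z u v]
      _ = ⁅⁅⁅x, y⁆, ⁅u, v⁆⁆, ⁅e, z⁆⁆ := neg_neg _
  -- Jacobi identity plus SYM forces the triple bracket to vanish.
  have key : ∀ a b c d e f : L, ⁅⁅⁅a, b⁆, ⁅e, f⁆⁆, ⁅c, d⁆⁆ = 0 := by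
    intro a b c d e f
    have jac := leibniz_lie (⁅a, b⁆ : L) ⁅c, d⁆ ⁅e, f⁆
    have h1 : ⁅(⁅a, b⁆ : L), ⁅⁅c, d⁆, ⁅e, f⁆⁆⁆ = ⁅⁅⁅a, b⁆, ⁅c, d⁆⁆, ⁅e, f⁆⁆ := by
      rw [← lie_skew (⁅c,d⁆ : L) ⁅e,f⁆, lie_neg, ← lie_skew (⁅a,b⁆ : L) ⁅⁅e,f⁆,⁅c,d⁆⁆,
        neg_neg, SYM a b e f c d]
    rw [h1] at jac
    have h2 : ⁅(⁅c, d⁆ : L), ⁅⁅a, b⁆, ⁅e, f⁆⁆⁆ = 0 := (left_eq_add.mp jac)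
    rw [← neg_eq_zero, lie_skew (⁅c, d⁆ : L) ⁅⁅a, b⁆, ⁅e, f⁆⁆]
    exact h2
  intro a b c d e f
  exact key a b e f c d
end

section
/- Let L be a Lie ring such that ⁅⁅⁅x₁,x₂⁆,x₃⁆,x₄⁆ = ⁅⁅⁅x₁,x_{σ(2)}⁆,x_{σ(3)}⁆,x_{σ(4)}⁆ for every permutation σ of {2,3,4} and all x₁, x₂, x₃, x₄ ∈ L. Then L is nilpotent of class at most 3, i.e., ⁅⁅⁅x₁,x₂⁆,x₃⁆,x₄⁆ = 0 for all x₁, x₂, x₃, x₄ ∈ L. Conversely, if all left-normed brackets of length 4 vanish then the permutation identity holds. -/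
theorem stmt_18 (L : Type*) [LieRing L] :
    (∀ σ : Equiv.Perm (Fin 3), ∀ (x₁ : L) (y : Fin 3 → L),
        ⁅⁅⁅x₁, y 0⁆, y 1⁆, y 2⁆ = ⁅⁅⁅x₁, y (σ 0)⁆, y (σ 1)⁆, y (σ 2)⁆) ↔
      (∀ x₁ x₂ x₃ x₄ : L, ⁅⁅⁅x₁, x₂⁆, x₃⁆, x₄⁆ = 0) := by
  constructor
  · intro h a b c d
    -- symmetry in positions 2,3
    have S : ∀ x y z w : L, ⁅⁅⁅x, y⁆, z⁆, w⁆ = ⁅⁅⁅x, z⁆, y⁆, w⁆ := by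
      intro x y z w
      simpa [Equiv.swap_apply_of_ne_of_ne] using h (Equiv.swap 0 1) x ![y, z, w]
    -- antisymmetry in positions 1,2
    have A : ∀ x y z w : L, ⁅⁅⁅x, y⁆, z⁆, w⁆ = -⁅⁅⁅y, x⁆, z⁆, w⁆ := by
      intro x y z w
      rw [← lie_skew x y, neg_lie, neg_lie]
    -- left-normed Jacobi identity bracketed with d
    have J : ⁅⁅⁅a, b⁆, c⁆, d⁆ + ⁅⁅⁅b, c⁆, a⁆, d⁆ + ⁅⁅⁅c, a⁆, b⁆, d⁆ = 0 := by
      rw [← add_lie, ← add_lie]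
      have jac : ⁅⁅a, b⁆, c⁆ + ⁅⁅b, c⁆, a⁆ + ⁅⁅c, a⁆, b⁆ = 0 := by
        rw [← lie_skew ⁅a, b⁆ c, ← lie_skew ⁅b, c⁆ a, ← lie_skew ⁅c, a⁆ b,
          ← neg_add, ← neg_add, lie_jacobi c a b, neg_zero]
      rw [jac, zero_lie]
    have h1 : ⁅⁅⁅b, c⁆, a⁆, d⁆ = -⁅⁅⁅a, b⁆, c⁆, d⁆ := by
      rw [S b c a d, A b a c d]
    have h2 : ⁅⁅⁅c, a⁆, b⁆, d⁆ = -⁅⁅⁅a, b⁆, c⁆, d⁆ := by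
      rw [A c a b d, S a c b d]
    rw [h1, h2] at J
    have hn : -⁅⁅⁅a, b⁆, c⁆, d⁆ = 0 := by
      have := J
      abel_nf at this ⊢
      simpa using this
    exact neg_eq_zero.mp hn
  · intro h σ x y
    rw [h, h]
end
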